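/- Define φ : ℝ → ℝ by φ(x) = -x/2 for x < 0, φ(x) = 1 for x ≥ 1, and on [0,1) the piecewise linear interpolation through (0,0) and the points (x_i^1, φ_i^1), (x_i^2, φ_i^2) for i ≥ 0, where x_i^1 = 1 - 7·2^{-i-3}, φ_i^1 = 1 - 9·2^{-2i-3}, x_i^2 = 1 - 5·2^{-i-3}, φ_i^2 = 1 - 3·2^{-2i-4}. Then x_i^1 < x_i^2 < x_{i+1}^1 for all i ≥ 0, and φ is well-defined, continuous, and globally Lipschitz. -/

import Mathlib

/-!
On `[0,1)`, `φ` interpolates the increasing nodes `0 < xA 0 < xB 0 < xA 1 < ⋯ → 1`; its segments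
have slopes `-1`, `15 / 2 ^ (i + 2)` and `-1 / 2 ^ (i + 1)`, all bounded by `4`. Gluing along
common endpoints, `φ` is `4`-Lipschitz on `[0, xA n]` for every `n`, hence on `[0,1)`; since
`xA i → 1` and `φ (xA i) = pA i → 1 = φ 1`, the bound passes to `[0,1]`, and the affine pieces on
`(-∞, 0]` and `[1, ∞)` glue on at `0` and `1`.
-/

open Filter Set Topology

noncomputable def xA (i : ℕ) : ℝ := 1 - 7 / 2 ^ (i + 3)
noncomputable def xB (i : ℕ) : ℝ := 1 - 5 / 2 ^ (i + 3)
noncomputable def pA (i : ℕ) : ℝ := 1 - 9 / 2 ^ (2 * i + 3)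
noncomputable def pB (i : ℕ) : ℝ := 1 - 3 / 2 ^ (2 * i + 4)

/-- `φ` is the piecewise linear function of Example 2.1: `φ(x) = -x/2` for `x < 0`,
`φ(x) = 1` for `x ≥ 1`, and on `[0,1)` the piecewise linear interpolation through
`(0,0)` and the nodes `(xA i, pA i)`, `(xB i, pB i)`. -/
def IsPhi (φ : ℝ → ℝ) : Prop :=
  (∀ x < (0:ℝ), φ x = -x / 2) ∧ (∀ x ≥ (1:ℝ), φ x = 1) ∧ φ 0 = 0 ∧
  (∀ i, φ (xA i) = pA i) ∧ (∀ i, φ (xB i) = pB i) ∧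
  (∀ x ∈ Set.Icc (0:ℝ) (xA 0), φ x = x * pA 0 / xA 0) ∧
  (∀ i, ∀ x ∈ Set.Icc (xA i) (xB i),
      φ x = pA i + (x - xA i) * (pB i - pA i) / (xB i - xA i)) ∧
  (∀ i, ∀ x ∈ Set.Icc (xB i) (xA (i + 1)),
      φ x = pB i + (x - xB i) * (pA (i + 1) - pB i) / (xA (i + 1) - xB i))

open scoped NNReal

namespace LipschitzOnWith

variable {α β : Type*} {K : ℝ≥0} {f g : α → β} {s : Set α}

theorem congr [PseudoEMetricSpace α] [PseudoEMetricSpace β] (hf : LipschitzOnWith K f s)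
    (h : EqOn f g s) : LipschitzOnWith K g s := fun x hx y hy => by
  rw [← h hx, ← h hy]
  exact hf hx hy

theorem iUnion_of_monotone [PseudoEMetricSpace α] [PseudoEMetricSpace β] {s : ℕ → Set α}
    (hs : Monotone s) (hf : ∀ n, LipschitzOnWith K f (s n)) :
    LipschitzOnWith K f (⋃ n, s n) := by
  intro x hx y hy
  obtain ⟨m, hm⟩ := mem_iUnion.1 hx
  obtain ⟨n, hn⟩ := mem_iUnion.1 hy
  exact hf (max m n) (hs (le_max_left m n) hm) (hs (le_max_right m n) hn)

theorem insert_of_tendsto [PseudoMetricSpace α] [PseudoMetricSpace β]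
    (hf : LipschitzOnWith K f s) {u : ℕ → α} {a : α} (hus : ∀ n, u n ∈ s)
    (hu : Tendsto u atTop (𝓝 a)) (hfu : Tendsto (f ∘ u) atTop (𝓝 (f a))) :
    LipschitzOnWith K f (insert a s) := by
  have key : ∀ x ∈ s, dist (f x) (f a) ≤ K * dist x a := fun x hx =>
    le_of_tendsto_of_tendsto' (tendsto_const_nhds.dist hfu)
      ((tendsto_const_nhds.dist hu).const_mul _) fun n => hf.dist_le_mul x hx (u n) (hus n)
  rw [lipschitzOnWith_iff_dist_le_mul]
  rintro x (rfl | hx) y (rfl | hy)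
  · simp
  · rw [dist_comm, dist_comm x]
    exact key y hy
  · exact key x hx
  · exact hf.dist_le_mul x hx y hy

/-- On the line `b` lies between any point of `s` and any point of `t`, so the triangle
inequality through `b` loses nothing. -/
theorem union_of_le [PseudoMetricSpace β] {f : ℝ → β} {s t : Set ℝ} {b : ℝ}
    (hs : LipschitzOnWith K f s) (ht : LipschitzOnWith K f t) (hbs : b ∈ s) (hbt : b ∈ t)
    (hsb : s ⊆ Iic b) (htb : t ⊆ Ici b) : LipschitzOnWith K f (s ∪ t) := by
  have key : ∀ x ∈ s, ∀ y ∈ t, dist (f x) (f y) ≤ K * dist x y := fun x hx y hy =>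
    calc dist (f x) (f y) ≤ dist (f x) (f b) + dist (f b) (f y) := dist_triangle _ _ _
      _ ≤ K * dist x b + K * dist b y :=
        add_le_add (hs.dist_le_mul x hx b hbs) (ht.dist_le_mul b hbt y hy)
      _ = K * dist x y := by
        have hxb : x ≤ b := hsb hx
        have hby : b ≤ y := htb hy
        rw [← mul_add, Real.dist_eq, Real.dist_eq, Real.dist_eq, abs_of_nonpos (by linarith),
          abs_of_nonpos (by linarith), abs_of_nonpos (by linarith)]
        ring
  rw [lipschitzOnWith_iff_dist_le_mul]
  rintro x (hx | hx) y (hy | hy)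
  · exact hs.dist_le_mul x hx y hy
  · exact key x hx y hy
  · rw [dist_comm, dist_comm x]
    exact key y hy x hx
  · exact ht.dist_le_mul x hx y hy

end LipschitzOnWith

theorem lipschitzOnWith_of_eqOn_affine {K : ℝ≥0} {f : ℝ → ℝ} {s : Set ℝ} {a c : ℝ}
    (hf : ∀ x ∈ s, f x = a + c * x) (hc : |c| ≤ K) : LipschitzOnWith K f s := by
  rw [lipschitzOnWith_iff_dist_le_mul]
  intro x hx y hy
  rw [Real.dist_eq, Real.dist_eq, hf x hx, hf y hy, show a + c * x - (a + c * y) = c * (x - y) by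
    ring, abs_mul]
  exact mul_le_mul_of_nonneg_right hc (abs_nonneg _)

section PiecewiseLinear

variable (t v : ℕ → ℝ)

noncomputable def segmentSlope (n : ℕ) : ℝ := (v (n + 1) - v n) / (t (n + 1) - t n)

/-- The interpolation of the values `v n` at the nodes `t n`. Left of `t 0` it continues the first
segment; where no `t (n + 1)` exceeds `x` it is `0`. -/
noncomputable def piecewiseLinear (x : ℝ) : ℝ :=
  open Classical in
  if h : ∃ n, x < t (n + 1) then
    v (Nat.find h) + (x - t (Nat.find h)) * segmentSlope t v (Nat.find h)
  else 0

variable {t v}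

theorem piecewiseLinear_eq_of_mem_Ico (ht : StrictMono t) {n : ℕ} {x : ℝ}
    (hx : x ∈ Ico (t n) (t (n + 1))) :
    piecewiseLinear t v x = v n + (x - t n) * segmentSlope t v n := by
  classical
  have h : ∃ n, x < t (n + 1) := ⟨n, hx.2⟩
  have hfind : Nat.find h = n :=
    (Nat.find_eq_iff h).2 ⟨hx.2, fun m hm => not_lt.2 ((ht.monotone hm).trans hx.1)⟩
  rw [piecewiseLinear, dif_pos h]
  simp only [hfind]

theorem piecewiseLinear_node (ht : StrictMono t) (n : ℕ) : piecewiseLinear t v (t n) = v n := by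
  rw [piecewiseLinear_eq_of_mem_Ico ht ⟨le_rfl, ht (Nat.lt_succ_self n)⟩, sub_self, zero_mul,
    add_zero]

theorem piecewiseLinear_eq_of_mem_Icc (ht : StrictMono t) {n : ℕ} {x : ℝ}
    (hx : x ∈ Icc (t n) (t (n + 1))) :
    piecewiseLinear t v x = v n + (x - t n) * segmentSlope t v n := by
  rcases hx.2.lt_or_eq with hlt | rfl
  · exact piecewiseLinear_eq_of_mem_Ico ht ⟨hx.1, hlt⟩
  · have hne : t (n + 1) - t n ≠ 0 := (sub_pos.2 (ht (Nat.lt_succ_self n))).ne'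
    rw [piecewiseLinear_node ht, segmentSlope]
    field_simp
    ring

theorem lipschitzOnWith_piecewiseLinear_Icc (ht : StrictMono t) {K : ℝ≥0}
    (hK : ∀ n, |segmentSlope t v n| ≤ K) (n : ℕ) :
    LipschitzOnWith K (piecewiseLinear t v) (Icc (t 0) (t n)) := by
  induction n with
  | zero =>
    rw [Icc_self]
    rintro x rfl y rfl
    simp
  | succ n ih =>
    have hcell : LipschitzOnWith K (piecewiseLinear t v) (Icc (t n) (t (n + 1))) :=
      lipschitzOnWith_of_eqOn_affine (a := v n - t n * segmentSlope t v n)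
        (fun x hx => by rw [piecewiseLinear_eq_of_mem_Icc ht hx]; ring) (hK n)
    have h0n : t 0 ≤ t n := ht.monotone n.zero_le
    have hn : t n ≤ t (n + 1) := (ht (Nat.lt_succ_self n)).le
    rw [← Icc_union_Icc_eq_Icc h0n hn]
    exact ih.union_of_le hcell (right_mem_Icc.2 h0n) (left_mem_Icc.2 hn) (fun _ hx => hx.2)
      fun _ hx => hx.1

theorem lipschitzOnWith_piecewiseLinear_iUnion (ht : StrictMono t) {K : ℝ≥0}
    (hK : ∀ n, |segmentSlope t v n| ≤ K) :
    LipschitzOnWith K (piecewiseLinear t v) (⋃ n, Icc (t 0) (t n)) :=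
  LipschitzOnWith.iUnion_of_monotone (fun _ _ h => Icc_subset_Icc_right (ht.monotone h))
    (lipschitzOnWith_piecewiseLinear_Icc ht hK)

end PiecewiseLinear

theorem xB_sub_xA (i : ℕ) : xB i - xA i = 1 / (4 * 2 ^ i) := by
  simp only [xA, xB, pow_add]
  field_simp
  ring

theorem xA_succ_sub_xB (i : ℕ) : xA (i + 1) - xB i = 3 / (16 * 2 ^ i) := by
  simp only [xA, xB, pow_add]
  field_simp
  ring

theorem xA_lt_xB (i : ℕ) : xA i < xB i := sub_pos.1 (by rw [xB_sub_xA]; positivity)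

theorem xB_lt_xA_succ (i : ℕ) : xB i < xA (i + 1) := sub_pos.1 (by rw [xA_succ_sub_xB]; positivity)

theorem slope_xA_xB (i : ℕ) : (pB i - pA i) / (xB i - xA i) = 15 / (4 * 2 ^ i) := by
  rw [xB_sub_xA]
  simp only [pA, pB, pow_add, pow_mul']
  field_simp
  ring

theorem slope_xB_xA_succ (i : ℕ) :
    (pA (i + 1) - pB i) / (xA (i + 1) - xB i) = -1 / (2 * 2 ^ i) := by
  rw [xA_succ_sub_xB]
  simp only [pA, pB, pow_add, pow_mul', mul_add]
  field_simp
  ring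

/-- The breakpoints `0, xA 0, xB 0, xA 1, xB 1, …` as one increasing sequence. -/
noncomputable def phiNode : ℕ → ℝ
  | 0 => 0
  | n + 1 => if Even n then xA (n / 2) else xB (n / 2)

noncomputable def phiValue : ℕ → ℝ
  | 0 => 0
  | n + 1 => if Even n then pA (n / 2) else pB (n / 2)

@[simp] theorem phiNode_zero : phiNode 0 = 0 := rfl

@[simp] theorem phiValue_zero : phiValue 0 = 0 := rfl

@[simp] theorem phiNode_two_mul_add_one (i : ℕ) : phiNode (2 * i + 1) = xA i := by
  simp [phiNode]

@[simp] theorem phiNode_two_mul_add_two (i : ℕ) : phiNode (2 * i + 2) = xB i := by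
  simp only [phiNode, Nat.not_even_two_mul_add_one, if_false]
  congr 1
  omega

@[simp] theorem phiValue_two_mul_add_one (i : ℕ) : phiValue (2 * i + 1) = pA i := by
  simp [phiValue]

@[simp] theorem phiValue_two_mul_add_two (i : ℕ) : phiValue (2 * i + 2) = pB i := by
  simp only [phiValue, Nat.not_even_two_mul_add_one, if_false]
  congr 1
  omega

theorem phiNode_two_mul_add_three (i : ℕ) : phiNode (2 * i + 2 + 1) = xA (i + 1) :=
  phiNode_two_mul_add_one (i + 1)

theorem phiValue_two_mul_add_three (i : ℕ) : phiValue (2 * i + 2 + 1) = pA (i + 1) :=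
  phiValue_two_mul_add_one (i + 1)

theorem segmentSlope_phi_zero : segmentSlope phiNode phiValue 0 = pA 0 / xA 0 := by
  simp [segmentSlope, phiNode, phiValue]

theorem segmentSlope_phi_two_mul_add_one (i : ℕ) :
    segmentSlope phiNode phiValue (2 * i + 1) = (pB i - pA i) / (xB i - xA i) := by
  simp [segmentSlope]

theorem segmentSlope_phi_two_mul_add_two (i : ℕ) :
    segmentSlope phiNode phiValue (2 * i + 2) = (pA (i + 1) - pB i) / (xA (i + 1) - xB i) := by
  rw [segmentSlope, phiNode_two_mul_add_three, phiValue_two_mul_add_three,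
    phiNode_two_mul_add_two, phiValue_two_mul_add_two]

theorem phiNode_strictMono : StrictMono phiNode := by
  refine strictMono_nat_of_lt_succ fun n => ?_
  rcases n with _ | n
  · norm_num [phiNode, xA]
  obtain ⟨i, rfl | rfl⟩ := Nat.even_or_odd' n
  · simpa using xA_lt_xB i
  · simpa [phiNode_two_mul_add_three] using xB_lt_xA_succ i

theorem abs_segmentSlope_phi_le (n : ℕ) : |segmentSlope phiNode phiValue n| ≤ 4 := by
  rcases n with _ | n
  · norm_num [segmentSlope_phi_zero, xA, pA]
  obtain ⟨i, rfl | rfl⟩ := Nat.even_or_odd' n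
  · rw [segmentSlope_phi_two_mul_add_one, slope_xA_xB, abs_of_pos (by positivity),
      div_le_iff₀ (by positivity)]
    nlinarith [one_le_pow₀ (M₀ := ℝ) one_le_two (n := i)]
  · rw [segmentSlope_phi_two_mul_add_two, slope_xB_xA_succ, abs_div, abs_neg, abs_one,
      abs_of_pos (by positivity), div_le_iff₀ (by positivity)]
    nlinarith [one_le_pow₀ (M₀ := ℝ) one_le_two (n := i)]

theorem tendsto_one_sub_div_two_pow {k : ℕ → ℕ} (hk : Tendsto k atTop atTop) (c : ℝ) :
    Tendsto (fun n => 1 - c / 2 ^ k n) atTop (𝓝 1) := by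
  have hpow : Tendsto (fun n => (2 : ℝ) ^ k n) atTop atTop :=
    (tendsto_pow_atTop_atTop_of_one_lt one_lt_two).comp hk
  simpa using (tendsto_const_nhds (x := (1 : ℝ))).sub (tendsto_const_nhds.div_atTop hpow)

theorem tendsto_xA : Tendsto xA atTop (𝓝 1) :=
  tendsto_one_sub_div_two_pow (tendsto_add_atTop_nat 3) 7

theorem tendsto_pA : Tendsto pA atTop (𝓝 1) :=
  tendsto_one_sub_div_two_pow
    (tendsto_atTop_mono (fun n => show n ≤ 2 * n + 3 by omega) tendsto_id) 9

theorem phiNode_mem_Ico (n : ℕ) : phiNode n ∈ Ico 0 1 := by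
  refine ⟨phiNode_strictMono.monotone n.zero_le, ?_⟩
  rcases n with _ | n
  · exact zero_lt_one
  · simp only [phiNode, xA, xB]
    split_ifs <;> exact sub_lt_self _ (by positivity)

noncomputable def phi (x : ℝ) : ℝ :=
  if x < 0 then -x / 2 else if x < 1 then piecewiseLinear phiNode phiValue x else 1

theorem phi_of_nonpos {x : ℝ} (hx : x ≤ 0) : phi x = -x / 2 := by
  rcases hx.lt_or_eq with hx | rfl
  · rw [phi, if_pos hx]
  · rw [phi, if_neg (lt_irrefl 0), if_pos zero_lt_one]
    simpa using piecewiseLinear_node phiNode_strictMono (v := phiValue) 0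

theorem phi_of_one_le {x : ℝ} (hx : 1 ≤ x) : phi x = 1 := by
  rw [phi, if_neg (by linarith), if_neg hx.not_gt]

theorem phi_of_mem_Ico {x : ℝ} (hx : x ∈ Ico 0 1) :
    phi x = piecewiseLinear phiNode phiValue x := by
  rw [phi, if_neg hx.1.not_gt, if_pos hx.2]

theorem phi_phiNode (n : ℕ) : phi (phiNode n) = phiValue n := by
  rw [phi_of_mem_Ico (phiNode_mem_Ico n), piecewiseLinear_node phiNode_strictMono]

theorem phi_of_mem_Icc {n : ℕ} {x : ℝ} (hx : x ∈ Icc (phiNode n) (phiNode (n + 1))) :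
    phi x = phiValue n + (x - phiNode n) * segmentSlope phiNode phiValue n := by
  have hx' : x ∈ Ico 0 1 :=
    ⟨(phiNode_mem_Ico n).1.trans hx.1, hx.2.trans_lt (phiNode_mem_Ico (n + 1)).2⟩
  rw [phi_of_mem_Ico hx', piecewiseLinear_eq_of_mem_Icc phiNode_strictMono hx]

theorem isPhi_phi : IsPhi phi := by
  refine ⟨fun x hx => phi_of_nonpos hx.le, fun x hx => phi_of_one_le hx, phi_phiNode 0,
    fun i => by simpa using phi_phiNode (2 * i + 1),
    fun i => by simpa using phi_phiNode (2 * i + 2),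
    fun x hx => ?_, fun i x hx => ?_, fun i x hx => ?_⟩
  · rw [phi_of_mem_Icc (n := 0) hx, segmentSlope_phi_zero]
    simp [phiNode, phiValue, mul_div_assoc]
  · rw [phi_of_mem_Icc (n := 2 * i + 1) (by simpa using hx), segmentSlope_phi_two_mul_add_one]
    simp [mul_div_assoc]
  · rw [phi_of_mem_Icc (n := 2 * i + 2) (by simpa [phiNode_two_mul_add_three] using hx),
      segmentSlope_phi_two_mul_add_two]
    simp [mul_div_assoc]

theorem lipschitzOnWith_phi_Icc : LipschitzOnWith 4 phi (Icc 0 1) := by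
  have hcover : Ico 0 1 ⊆ ⋃ n, Icc (phiNode 0) (phiNode n) := fun x hx => by
    obtain ⟨i, hi⟩ := (tendsto_xA.eventually (lt_mem_nhds hx.2)).exists
    exact mem_iUnion.2 ⟨2 * i + 1, hx.1, by simpa using hi.le⟩
  have hIco : LipschitzOnWith 4 phi (Ico 0 1) :=
    ((lipschitzOnWith_piecewiseLinear_iUnion phiNode_strictMono abs_segmentSlope_phi_le).mono
      hcover).congr fun x hx => (phi_of_mem_Ico hx).symm
  have hxA (i : ℕ) : xA i ∈ Ico 0 1 := by simpa using phiNode_mem_Ico (2 * i + 1)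
  have hphi_xA : phi ∘ xA = pA := funext fun i => by simpa using phi_phiNode (2 * i + 1)
  rw [← Ico_insert_right zero_le_one]
  exact hIco.insert_of_tendsto hxA tendsto_xA
    (by rw [hphi_xA, phi_of_one_le le_rfl]; exact tendsto_pA)

theorem lipschitzWith_phi : LipschitzWith 4 phi := by
  have hIic : LipschitzOnWith 4 phi (Iic 0) :=
    lipschitzOnWith_of_eqOn_affine (a := 0) (c := -1 / 2)
      (fun x hx => by rw [phi_of_nonpos hx]; ring) (by norm_num)
  have hIci : LipschitzOnWith 4 phi (Ici 1) :=
    lipschitzOnWith_of_eqOn_affine (a := 1) (c := 0)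
      (fun x hx => by rw [phi_of_one_le hx]; ring) (by norm_num)
  have hIic_one := hIic.union_of_le lipschitzOnWith_phi_Icc self_mem_Iic
    (left_mem_Icc.2 zero_le_one) subset_rfl fun _ hx => hx.1
  rw [Iic_union_Icc_eq_Iic zero_le_one] at hIic_one
  have := hIic_one.union_of_le hIci self_mem_Iic self_mem_Ici subset_rfl subset_rfl
  rwa [Iic_union_Ici, lipschitzOnWith_univ] at this

theorem stmt13 :
    (∀ i : ℕ, xA i < xB i ∧ xB i < xA (i + 1)) ∧
    ∃ φ : ℝ → ℝ, IsPhi φ ∧ Continuous φ ∧ ∃ K : NNReal, LipschitzWith K φ :=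
  ⟨fun i => ⟨xA_lt_xB i, xB_lt_xA_succ i⟩, phi, isPhi_phi, lipschitzWith_phi.continuous, 4,
    lipschitzWith_phi⟩
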